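/- Let λ ∈ ℂ with λ ≠ 0 and let u : ℝ → ℂ be differentiable with continuous derivative and 1-periodic (u(x+1) = u(x) for all x). Then the following are equivalent: (a) there exist differentiable f₁, f₂ : ℝ → ℂ, not both identically zero, with f₁'(x) = -iλ f₁(x) + i u(x) f₂(x), f₂'(x) = -i u(x) f₁(x) + iλ f₂(x), f₁(x+2) = f₁(x), and f₂(x+2) = f₂(x) for all x ∈ ℝ; (b) there exists a twice differentiable g : ℝ → ℂ, not identically zero, with -g''(x) + (u'(x) + u(x)²) g(x) = λ² g(x) and g(x+2) = g(x) for all x ∈ ℝ. -/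

import Mathlib

/-!
Rotating the Zakharov–Shabat system by `g = (f₁ + i f₂) / 2`, `h = (i f₁ + f₂) / 2` turns it into
`g' = u g - λ h`, `h' = λ g - u h`. Differentiating the first equation once more and substituting
the second gives `-g'' + (u' + u²) g = λ² g`. Conversely, for `λ ≠ 0` a Hill eigenfunction `g`
determines `h = (u g - g') / λ`, and inverting the rotation, `f₁ = g - i h`, `f₂ = h - i g`,
gives a solution of the Zakharov–Shabat system. All these formulas preserve periodicity.
-/

open Complex

theorem Function.Periodic.deriv {𝕜 F : Type*} [NontriviallyNormedField 𝕜] [NormedAddCommGroup F]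
    [NormedSpace 𝕜 F] {f : 𝕜 → F} {c : 𝕜} (hf : Function.Periodic f c) :
    Function.Periodic (deriv f) c := fun x => by
  rw [← deriv_comp_add_const, hf.funext]

namespace ZakharovShabat

variable {lam : ℂ} {u u' g h f₁ f₂ : ℝ → ℂ}

theorem hasDerivAt_rotate_fst
    (hf₁ : ∀ x, HasDerivAt f₁ (-I * lam * f₁ x + I * u x * f₂ x) x)
    (hf₂ : ∀ x, HasDerivAt f₂ (-I * u x * f₁ x + I * lam * f₂ x) x) (x : ℝ) :
    HasDerivAt (fun x => (f₁ x + I * f₂ x) / 2)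
      (u x * ((f₁ x + I * f₂ x) / 2) - lam * ((I * f₁ x + f₂ x) / 2)) x :=
  (((hf₁ x).add ((hf₂ x).const_mul I)).div_const 2).congr_deriv <| by
    linear_combination (-(u x * f₁ x - lam * f₂ x) / 2) * I_sq

theorem hasDerivAt_rotate_snd
    (hf₁ : ∀ x, HasDerivAt f₁ (-I * lam * f₁ x + I * u x * f₂ x) x)
    (hf₂ : ∀ x, HasDerivAt f₂ (-I * u x * f₁ x + I * lam * f₂ x) x) (x : ℝ) :
    HasDerivAt (fun x => (I * f₁ x + f₂ x) / 2)
      (lam * ((f₁ x + I * f₂ x) / 2) - u x * ((I * f₁ x + f₂ x) / 2)) x :=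
  ((((hf₁ x).const_mul I).add (hf₂ x)).div_const 2).congr_deriv <| by
    linear_combination (-(lam * f₁ x - u x * f₂ x) / 2) * I_sq

theorem hasDerivAt_unrotate_fst
    (hg : ∀ x, HasDerivAt g (u x * g x - lam * h x) x)
    (hh : ∀ x, HasDerivAt h (lam * g x - u x * h x) x) (x : ℝ) :
    HasDerivAt (fun x => g x - I * h x)
      (-I * lam * (g x - I * h x) + I * u x * (h x - I * g x)) x :=
  ((hg x).sub ((hh x).const_mul I)).congr_deriv <| by
    linear_combination (u x * g x - lam * h x) * I_sq

theorem hasDerivAt_unrotate_snd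
    (hg : ∀ x, HasDerivAt g (u x * g x - lam * h x) x)
    (hh : ∀ x, HasDerivAt h (lam * g x - u x * h x) x) (x : ℝ) :
    HasDerivAt (fun x => h x - I * g x)
      (-I * u x * (g x - I * h x) + I * lam * (h x - I * g x)) x :=
  ((hh x).sub ((hg x).const_mul I)).congr_deriv <| by
    linear_combination (lam * g x - u x * h x) * I_sq

theorem hasDerivAt_deriv_of_rotated (hu : ∀ x, HasDerivAt u (u' x) x)
    (hg : ∀ x, HasDerivAt g (u x * g x - lam * h x) x)
    (hh : ∀ x, HasDerivAt h (lam * g x - u x * h x) x) (x : ℝ) :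
    HasDerivAt (deriv g) ((u' x + u x ^ 2 - lam ^ 2) * g x) x := by
  have hg' : deriv g = fun x => u x * g x - lam * h x := funext fun x => (hg x).deriv
  rw [hg']
  exact (((hu x).mul (hg x)).sub ((hh x).const_mul lam)).congr_deriv (by ring)

theorem hasDerivAt_partner_of_hill (hlam : lam ≠ 0) (hu : ∀ x, HasDerivAt u (u' x) x)
    (hg : ∀ x, HasDerivAt g (deriv g x) x)
    (hg' : ∀ x, HasDerivAt (deriv g) ((u' x + u x ^ 2 - lam ^ 2) * g x) x) (x : ℝ) :
    HasDerivAt (fun x => (u x * g x - deriv g x) / lam)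
      (lam * g x - u x * ((u x * g x - deriv g x) / lam)) x :=
  ((((hu x).mul (hg x)).sub (hg' x)).div_const lam).congr_deriv <| by
    field_simp
    ring

theorem exists_hill_of_zs (hlam : lam ≠ 0) (hu : ∀ x, HasDerivAt u (u' x) x)
    (hf₁ : ∀ x, HasDerivAt f₁ (-I * lam * f₁ x + I * u x * f₂ x) x)
    (hf₂ : ∀ x, HasDerivAt f₂ (-I * u x * f₁ x + I * lam * f₂ x) x) {p : ℝ}
    (hp₁ : Function.Periodic f₁ p) (hp₂ : Function.Periodic f₂ p) (hne : ¬(f₁ = 0 ∧ f₂ = 0)) :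
    ∃ g : ℝ → ℂ, (∀ x, DifferentiableAt ℝ g x) ∧
      (∀ x, HasDerivAt (deriv g) ((u' x + u x ^ 2 - lam ^ 2) * g x) x) ∧
      Function.Periodic g p ∧ g ≠ 0 := by
  have hg := hasDerivAt_rotate_fst hf₁ hf₂
  have hh := hasDerivAt_rotate_snd hf₁ hf₂
  refine ⟨_, fun x => (hg x).differentiableAt, hasDerivAt_deriv_of_rotated hu hg hh,
    fun x => by simp only [hp₁ x, hp₂ x], fun hg0 => hne ?_⟩
  -- `g = 0` forces `h = 0` through `g' = u g - λ h`, and the rotation is invertible.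
  have hgx (x : ℝ) : (f₁ x + I * f₂ x) / 2 = 0 := congrFun hg0 x
  have hhx (x : ℝ) : (I * f₁ x + f₂ x) / 2 = 0 := by
    have hd : deriv (fun x => (f₁ x + I * f₂ x) / 2) x = 0 := by rw [hg0]; exact deriv_const x 0
    rw [(hg x).deriv, hgx x] at hd
    simpa [hlam] using hd
  constructor <;> funext x <;> rw [Pi.zero_apply]
  · linear_combination hgx x - I * hhx x + (f₁ x / 2) * I_sq
  · linear_combination hhx x - I * hgx x + (f₂ x / 2) * I_sq

theorem exists_zs_of_hill (hlam : lam ≠ 0) (hu : ∀ x, HasDerivAt u (u' x) x)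
    (hg : ∀ x, HasDerivAt g (deriv g x) x)
    (hg' : ∀ x, HasDerivAt (deriv g) ((u' x + u x ^ 2 - lam ^ 2) * g x) x) {p : ℝ}
    (hpu : Function.Periodic u p) (hpg : Function.Periodic g p) (hne : g ≠ 0) :
    ∃ f₁ f₂ : ℝ → ℂ,
      (∀ x, HasDerivAt f₁ (-I * lam * f₁ x + I * u x * f₂ x) x) ∧
      (∀ x, HasDerivAt f₂ (-I * u x * f₁ x + I * lam * f₂ x) x) ∧
      Function.Periodic f₁ p ∧ Function.Periodic f₂ p ∧ ¬(f₁ = 0 ∧ f₂ = 0) := by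
  set h := fun x => (u x * g x - deriv g x) / lam
  have hh := hasDerivAt_partner_of_hill hlam hu hg hg'
  have hgh (x : ℝ) : HasDerivAt g (u x * g x - lam * h x) x :=
    (hg x).congr_deriv (by simp only [h]; field_simp; ring)
  have hph : Function.Periodic h p := fun x => by simp only [h, hpu x, hpg x, hpg.deriv x]
  refine ⟨_, _, hasDerivAt_unrotate_fst hgh hh, hasDerivAt_unrotate_snd hgh hh,
    fun x => by simp only [hpg x, hph x], fun x => by simp only [hpg x, hph x], ?_⟩
  rintro ⟨h₁, h₂⟩
  refine hne (funext fun x => ?_)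
  rw [Pi.zero_apply]
  have e₁ : g x - I * h x = 0 := congrFun h₁ x
  have e₂ : h x - I * g x = 0 := congrFun h₂ x
  linear_combination (e₁ + I * e₂) / 2 + (g x / 2) * I_sq

end ZakharovShabat

theorem zs_hill_periodic_eigenvalue_iff
    (lam : ℂ) (hlam : lam ≠ 0) (u : ℝ → ℂ)
    (hu : ContDiff ℝ 1 u) (hper : ∀ x : ℝ, u (x + 1) = u x) :
    (∃ f₁ f₂ : ℝ → ℂ,
      (∀ x : ℝ, HasDerivAt f₁ (-I * lam * f₁ x + I * u x * f₂ x) x) ∧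
      (∀ x : ℝ, HasDerivAt f₂ (-I * u x * f₁ x + I * lam * f₂ x) x) ∧
      (∀ x : ℝ, f₁ (x + 2) = f₁ x) ∧
      (∀ x : ℝ, f₂ (x + 2) = f₂ x) ∧
      ¬(f₁ = 0 ∧ f₂ = 0)) ↔
    (∃ g : ℝ → ℂ,
      (∀ x : ℝ, DifferentiableAt ℝ g x) ∧
      (∀ x : ℝ, DifferentiableAt ℝ (deriv g) x) ∧
      (∀ x : ℝ, -(deriv (deriv g) x) + (deriv u x + u x ^ 2) * g x = lam ^ 2 * g x) ∧
      (∀ x : ℝ, g (x + 2) = g x) ∧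
      g ≠ 0) := by
  have hud (x : ℝ) : HasDerivAt u (deriv u x) x := (hu.differentiable one_ne_zero x).hasDerivAt
  have hper₂ : Function.Periodic u 2 := by
    simpa [one_add_one_eq_two] using Function.Periodic.add_period hper hper
  constructor
  · rintro ⟨f₁, f₂, hf₁, hf₂, hp₁, hp₂, hne⟩
    obtain ⟨g, hg, hg', hpg, hgne⟩ := ZakharovShabat.exists_hill_of_zs hlam hud hf₁ hf₂ hp₁ hp₂ hne
    refine ⟨g, hg, fun x => (hg' x).differentiableAt, fun x => ?_, hpg, hgne⟩
    rw [(hg' x).deriv]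
    ring
  · rintro ⟨g, hg, hg', hhill, hpg, hgne⟩
    have hg'' (x : ℝ) : HasDerivAt (deriv g) ((deriv u x + u x ^ 2 - lam ^ 2) * g x) x :=
      (hg' x).hasDerivAt.congr_deriv (by linear_combination -hhill x)
    exact ZakharovShabat.exists_zs_of_hill hlam hud (fun x => (hg x).hasDerivAt) hg'' hper₂ hpg hgne
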